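/- Let G be a finite group and let A(G) be its Burnside ring, the Grothendieck group of the commutative monoid of isomorphism classes of finite G-sets under disjoint union, with multiplication induced by the cartesian product. Then the ring homomorphism χ : A(G) → ∏_{(H)} ℤ, sending the class of a finite G-set S to the tuple of fixed-point cardinalities (|S^H|) indexed by conjugacy classes of subgroups H ≤ G, is injective. -/

import Mathlib

/-- A finite `G`-set: a finite type together with an action of `G`, encoded by a
homomorphism `G →* Equiv.Perm X`. -/
structure FinGSet (G : Type) [Group G] : Type 1 where
  X : Type
  [fin : Fintype X]
  ρ : G →* Equiv.Perm X

attribute [instance] FinGSet.fin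

namespace FinGSet

variable {G : Type} [Group G]

/-- Disjoint union of finite `G`-sets. -/
def disjUnion (S T : FinGSet G) : FinGSet G where
  X := S.X ⊕ T.X
  ρ := (Equiv.Perm.sumCongrHom S.X T.X).comp (S.ρ.prod T.ρ)

/-- Cartesian product of finite `G`-sets with the diagonal action. -/
def prod (S T : FinGSet G) : FinGSet G where
  X := S.X × T.X
  ρ :=
    { toFun := fun g => Equiv.prodCongr (S.ρ g) (T.ρ g)
      map_one' := by
        ext x <;> simp
      map_mul' := fun a b => by
        ext x <;> simp [Equiv.Perm.mul_apply] }

/-- The one-point `G`-set. -/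
def point (G : Type) [Group G] : FinGSet G where
  X := PUnit
  ρ := 1

/-- `G`-equivariant isomorphism of finite `G`-sets. -/
def Iso (S T : FinGSet G) : Prop :=
  ∃ e : S.X ≃ T.X, ∀ (g : G) (x : S.X), e (S.ρ g x) = T.ρ g (e x)

end FinGSet
/-- The defining relations of the Burnside ring, as a set of elements of the free
commutative ring on finite `G`-sets: classes are additive on disjoint unions,
multiplicative on cartesian products, invariant under `G`-isomorphism, and the one-point
`G`-set is the unit. -/
def BurnsideRel (G : Type) [Group G] : Set (FreeCommRing (FinGSet G)) :=
  {z | (∃ S T : FinGSet G,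
          z = FreeCommRing.of (S.disjUnion T) - FreeCommRing.of S - FreeCommRing.of T) ∨
       (∃ S T : FinGSet G,
          z = FreeCommRing.of (S.prod T) - FreeCommRing.of S * FreeCommRing.of T) ∨
       (∃ S T : FinGSet G, S.Iso T ∧ z = FreeCommRing.of S - FreeCommRing.of T) ∨
       (z = FreeCommRing.of (FinGSet.point G) - 1)}

/-- The Burnside ring `A(G)` of a group `G`: the Grothendieck ring of isomorphism classes
of finite `G`-sets, with addition induced by disjoint union and multiplication induced by
the cartesian product. -/
abbrev BurnsideRing (G : Type) [Group G] : Type 1 :=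
  FreeCommRing (FinGSet G) ⧸ Ideal.span (BurnsideRel G)

/-- The class of a finite `G`-set in the Burnside ring. -/
noncomputable def BurnsideRing.mk {G : Type} [Group G] (S : FinGSet G) : BurnsideRing G :=
  Ideal.Quotient.mk _ (FreeCommRing.of S)

/-- Conjugacy classes of subgroups of `G`. -/
def SubgroupConjClass (G : Type) [Group G] : Type :=
  Quot (fun H K : Subgroup G => ∃ g : G, Subgroup.map (MulAut.conj g).toMonoidHom H = K)

variable {G : Type} [Group G]

section Perm
variable {X Y : Type}

/-- stabilizer of a point under a permutation representation -/
def pstab (ρ : G →* Equiv.Perm X) (a : X) : Subgroup G where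
  carrier := {g | ρ g a = a}
  one_mem' := by simp
  mul_mem' := by
    intro g h hg hh
    simp only [Set.mem_setOf_eq, map_mul, Equiv.Perm.mul_apply] at *
    rw [hh, hg]
  inv_mem' := by
    intro g hg
    simp only [Set.mem_setOf_eq, map_inv] at *
    conv_lhs => rw [← hg]
    simp

lemma pstab_mem {ρ : G →* Equiv.Perm X} {a : X} {g : G} : g ∈ pstab ρ a ↔ ρ g a = a := Iff.rfl

/-- orbit -/
def porb (ρ : G →* Equiv.Perm X) (a : X) : Set X := Set.range fun g => ρ g a

lemma porb_self (ρ : G →* Equiv.Perm X) (a : X) : a ∈ porb ρ a := ⟨1, by simp⟩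

lemma porb_smul (ρ : G →* Equiv.Perm X) (a : X) (g : G) {x : X} :
    ρ g x ∈ porb ρ a ↔ x ∈ porb ρ a := by
  constructor
  · rintro ⟨h, hh⟩
    exact ⟨g⁻¹ * h, by simp only [map_mul, Equiv.Perm.mul_apply, hh, map_inv]; simp⟩
  · rintro ⟨h, hh⟩
    exact ⟨g * h, by simp [map_mul, Equiv.Perm.mul_apply, hh]⟩

/-- restriction to an invariant subset -/
def resPerm (ρ : G →* Equiv.Perm X) (p : X → Prop) (hp : ∀ g x, p x → p (ρ g x)) :
    G →* Equiv.Perm {x // p x} where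
  toFun g :=
    { toFun := fun x => ⟨ρ g x.1, hp g x.1 x.2⟩
      invFun := fun x => ⟨ρ g⁻¹ x.1, hp g⁻¹ x.1 x.2⟩
      left_inv := fun x => by ext; simp [← Equiv.Perm.mul_apply, ← map_mul]
      right_inv := fun x => by ext; simp }
  map_one' := by ext x; simp
  map_mul' g h := by ext x; simp [Equiv.Perm.mul_apply]

@[simp] lemma resPerm_apply (ρ : G →* Equiv.Perm X) (p : X → Prop) (hp) (g : G) (x : {x // p x}) :
    (resPerm ρ p hp g x : X) = ρ g x.1 := rfl

/-- fixed point counts transported along an equivariant bijection -/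
lemma card_fix_congr (ρ : G →* Equiv.Perm X) (σ : G →* Equiv.Perm Y) (e : X ≃ Y)
    (he : ∀ g x, e (ρ g x) = σ g (e x)) (H : Subgroup G) :
    Nat.card {x : X // ∀ g ∈ H, ρ g x = x} = Nat.card {y : Y // ∀ g ∈ H, σ g y = y} := by
  apply Nat.card_congr
  refine e.subtypeEquiv fun x => ⟨fun h g hg => ?_, fun h g hg => e.injective ?_⟩
  · rw [← he, h g hg]
  · rw [he, h g hg]

/-- split fixed points by a predicate -/
lemma card_split (q p : X → Prop) [Finite X] :
    Nat.card {x : X // q x} =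
      Nat.card {x : X // q x ∧ p x} + Nat.card {x : X // q x ∧ ¬ p x} := by
  classical
  rw [← Nat.card_sum]
  apply Nat.card_congr
  exact
    { toFun := fun x => if h : p x.1 then Sum.inl ⟨x.1, x.2, h⟩ else Sum.inr ⟨x.1, x.2, h⟩
      invFun := fun z => z.elim (fun x => ⟨x.1, x.2.1⟩) (fun x => ⟨x.1, x.2.1⟩)
      left_inv := fun x => by by_cases h : p x.1 <;> simp [h]
      right_inv := fun z => by
        rcases z with x | x
        · simp [x.2.2]
        · simp [x.2.2] }

/-- fixed points of the restricted action -/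
lemma card_fix_res (ρ : G →* Equiv.Perm X) (p : X → Prop) (hp) (H : Subgroup G) :
    Nat.card {z : {x // p x} // ∀ g ∈ H, resPerm ρ p hp g z = z} =
      Nat.card {x : X // (∀ g ∈ H, ρ g x = x) ∧ p x} := by
  apply Nat.card_congr
  exact
    { toFun := fun z => ⟨z.1.1, fun g hg => congrArg Subtype.val (z.2 g hg), z.1.2⟩
      invFun := fun x => ⟨⟨x.1, x.2.2⟩, fun g hg => Subtype.ext (x.2.1 g hg)⟩
      left_inv := fun z => rfl
      right_inv := fun x => rfl }

lemma card_add_compl {X : Type} [Finite X] (p : X → Prop) :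
    Nat.card X = Nat.card {x // p x} + Nat.card {x // ¬ p x} := by
  classical
  rw [← Nat.card_sum]
  exact (Nat.card_congr (Equiv.sumCompl p)).symm

lemma subgroup_eq_of_le_of_card_le [Finite G] {H K : Subgroup G} (hle : H ≤ K)
    (hc : Nat.card K ≤ Nat.card H) : H = K := by
  apply SetLike.coe_injective
  apply Set.eq_of_subset_of_ncard_le hle _ (Set.toFinite _)
  rwa [← Nat.card_coe_set_eq, ← Nat.card_coe_set_eq]

lemma stab_transfer {X Y : Type} {ρ : G →* Equiv.Perm X} {σ : G →* Equiv.Perm Y} {a : X} {b : Y}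
    (hab : pstab ρ a = pstab σ b) {g g' : G} (h : ρ g a = ρ g' a) : σ g b = σ g' b := by
  have h1 : g'⁻¹ * g ∈ pstab ρ a := by
    rw [pstab_mem, map_mul, Equiv.Perm.mul_apply, h, map_inv]
    simp
  rw [hab, pstab_mem] at h1
  have h2 := congrArg (σ g') h1
  rwa [← Equiv.Perm.mul_apply, ← map_mul, mul_inv_cancel_left] at h2

lemma orbit_equiv {X Y : Type} (ρ : G →* Equiv.Perm X) (σ : G →* Equiv.Perm Y) (a : X) (b : Y)
    (hab : pstab ρ a = pstab σ b) :
    ∃ F : {x // x ∈ porb ρ a} ≃ {y // y ∈ porb σ b},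
      ∀ (g : G) (x : {x // x ∈ porb ρ a}),
        (F ⟨ρ g x.1, (porb_smul ρ a g).mpr x.2⟩).1 = σ g (F x).1 := by
  refine ⟨{
    toFun := fun z => ⟨σ z.2.choose b, ⟨z.2.choose, rfl⟩⟩
    invFun := fun w => ⟨ρ w.2.choose a, ⟨w.2.choose, rfl⟩⟩
    left_inv := ?_
    right_inv := ?_ }, ?_⟩
  · intro z
    apply Subtype.ext
    have hz : ρ z.2.choose a = z.1 := z.2.choose_spec
    have hw : σ (⟨σ z.2.choose b, ⟨z.2.choose, rfl⟩⟩ : {y // y ∈ porb σ b}).2.choose b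
        = σ z.2.choose b :=
      (⟨σ z.2.choose b, ⟨z.2.choose, rfl⟩⟩ : {y // y ∈ porb σ b}).2.choose_spec
    show ρ _ a = z.1
    rw [stab_transfer hab.symm hw, hz]
  · intro w
    apply Subtype.ext
    have hwc : σ w.2.choose b = w.1 := w.2.choose_spec
    have hz : ρ (⟨ρ w.2.choose a, ⟨w.2.choose, rfl⟩⟩ : {x // x ∈ porb ρ a}).2.choose a
        = ρ w.2.choose a :=
      (⟨ρ w.2.choose a, ⟨w.2.choose, rfl⟩⟩ : {x // x ∈ porb ρ a}).2.choose_spec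
    show σ _ b = w.1
    rw [stab_transfer hab hz, hwc]
  · intro g x
    have hx : ρ x.2.choose a = x.1 := x.2.choose_spec
    have hx' : ρ (⟨ρ g x.1, (porb_smul ρ a g).mpr x.2⟩ : {x // x ∈ porb ρ a}).2.choose a
        = ρ g x.1 :=
      (⟨ρ g x.1, (porb_smul ρ a g).mpr x.2⟩ : {x // x ∈ porb ρ a}).2.choose_spec
    show σ _ b = σ g (σ _ b)
    rw [← Equiv.Perm.mul_apply, ← map_mul]
    apply stab_transfer hab
    rw [hx', map_mul, Equiv.Perm.mul_apply, hx]

lemma fix_all_bot {X : Type} (ρ : G →* Equiv.Perm X) :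
    ∀ x : X, ∀ g ∈ (⊥ : Subgroup G), ρ g x = x := by
  intro x g hg
  rcases Subgroup.mem_bot.mp hg with rfl
  simp

lemma card_eq_of_marks {X Y : Type} (ρ : G →* Equiv.Perm X) (σ : G →* Equiv.Perm Y)
    (h : ∀ H : Subgroup G,
      Nat.card {x : X // ∀ g ∈ H, ρ g x = x} = Nat.card {y : Y // ∀ g ∈ H, σ g y = y}) :
    Nat.card X = Nat.card Y := by
  have := h ⊥
  rwa [Nat.card_congr (Equiv.subtypeUnivEquiv (fix_all_bot ρ)),
    Nat.card_congr (Equiv.subtypeUnivEquiv (fix_all_bot σ))] at this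

lemma max_pair_aux [Finite G] {X Y : Type} [Finite X] [Finite Y]
    (ρ : G →* Equiv.Perm X) (σ : G →* Equiv.Perm Y) (a : X)
    (hmax : ∀ y : Y, Nat.card (pstab σ y) ≤ Nat.card (pstab ρ a))
    (h : ∀ H : Subgroup G,
      Nat.card {x : X // ∀ g ∈ H, ρ g x = x} = Nat.card {y : Y // ∀ g ∈ H, σ g y = y}) :
    ∃ b : Y, pstab ρ a = pstab σ b := by
  have hpos : 0 < Nat.card {x : X // ∀ g ∈ pstab ρ a, ρ g x = x} := by
    have : Nonempty {x : X // ∀ g ∈ pstab ρ a, ρ g x = x} := ⟨⟨a, fun g hg => hg⟩⟩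
    exact Nat.card_pos
  rw [h (pstab ρ a)] at hpos
  obtain ⟨b, hb⟩ := (Nat.card_pos_iff.mp hpos).1
  refine ⟨b, subgroup_eq_of_le_of_card_le (fun g hg => hb g hg) (hmax b)⟩

lemma exists_pair [Finite G] {X Y : Type} [Finite X] [Finite Y]
    (ρ : G →* Equiv.Perm X) (σ : G →* Equiv.Perm Y) [Nonempty X]
    (h : ∀ H : Subgroup G,
      Nat.card {x : X // ∀ g ∈ H, ρ g x = x} = Nat.card {y : Y // ∀ g ∈ H, σ g y = y}) :
    ∃ a : X, ∃ b : Y, pstab ρ a = pstab σ b := by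
  have : Nonempty (X ⊕ Y) := ⟨Sum.inl (Classical.arbitrary X)⟩
  obtain ⟨p, hp⟩ := Finite.exists_max
    (fun z : X ⊕ Y => z.elim (fun x => Nat.card (pstab ρ x)) (fun y => Nat.card (pstab σ y)))
  rcases p with a | b
  · obtain ⟨b, hb⟩ := max_pair_aux ρ σ a (fun y => hp (Sum.inr y)) h
    exact ⟨a, b, hb⟩
  · obtain ⟨a, ha⟩ := max_pair_aux σ ρ b (fun x => hp (Sum.inl x)) (fun H => (h H).symm)
    exact ⟨a, b, ha.symm⟩

theorem marks_iso [Finite G] (n : ℕ) :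
    ∀ (X Y : Type) (_ : Finite X) (_ : Finite Y)
      (ρ : G →* Equiv.Perm X) (σ : G →* Equiv.Perm Y), Nat.card X ≤ n →
      (∀ H : Subgroup G,
        Nat.card {x : X // ∀ g ∈ H, ρ g x = x} = Nat.card {y : Y // ∀ g ∈ H, σ g y = y}) →
      ∃ e : X ≃ Y, ∀ (g : G) (x : X), e (ρ g x) = σ g (e x) := by
  induction n with
  | zero =>
    intro X Y _ _ ρ σ hc h
    have hX : IsEmpty X := by
      rcases Nat.card_eq_zero.mp (Nat.le_zero.mp hc) with h' | h'
      · exact h'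
      · exact absurd h' (not_infinite_iff_finite.mpr ‹_›)
    have hY : IsEmpty Y := by
      have := card_eq_of_marks ρ σ h
      rcases Nat.card_eq_zero.mp (this ▸ Nat.le_zero.mp hc) with h' | h'
      · exact h'
      · exact absurd h' (not_infinite_iff_finite.mpr ‹_›)
    exact ⟨Equiv.equivOfIsEmpty X Y, fun g x => (hX.false x).elim⟩
  | succ n ih =>
    intro X Y _ _ ρ σ hc h
    by_cases hne : Nonempty X
    swap
    · exact ih X Y ‹_› ‹_› ρ σ (by simp [Nat.card_eq_zero, not_nonempty_iff.mp hne]) h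
    -- nonempty case
    obtain ⟨a, b, hab⟩ := exists_pair ρ σ h
    set p : X → Prop := fun x => x ∈ porb ρ a with hp_def
    set q : Y → Prop := fun y => y ∈ porb σ b with hq_def
    have hp : ∀ g x, ¬ p x → ¬ p (ρ g x) := fun g x hx h' => hx ((porb_smul ρ a g).mp h')
    have hq : ∀ g y, ¬ q y → ¬ q (σ g y) := fun g y hy h' => hy ((porb_smul σ b g).mp h')
    obtain ⟨F, hF⟩ := orbit_equiv ρ σ a b hab
    -- orbit marks agree
    have horb : ∀ H : Subgroup G,
        Nat.card {x : X // (∀ g ∈ H, ρ g x = x) ∧ p x} =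
        Nat.card {y : Y // (∀ g ∈ H, σ g y = y) ∧ q y} := by
      intro H
      rw [← card_fix_res ρ p (fun g x hx => (porb_smul ρ a g).mpr hx) H,
        ← card_fix_res σ q (fun g y hy => (porb_smul σ b g).mpr hy) H]
      exact card_fix_congr _ _ F (fun g z => Subtype.ext (hF g z)) H
    -- complement marks agree
    have hcomp : ∀ H : Subgroup G,
        Nat.card {z : {x // ¬ p x} // ∀ g ∈ H, resPerm ρ _ hp g z = z} =
        Nat.card {w : {y // ¬ q y} // ∀ g ∈ H, resPerm σ _ hq g w = w} := by
      intro H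
      rw [card_fix_res, card_fix_res]
      have h1 := card_split (fun x : X => ∀ g ∈ H, ρ g x = x) p
      have h2 := card_split (fun y : Y => ∀ g ∈ H, σ g y = y) q
      have := h H
      have := horb H
      omega
    -- cardinality bound for the complement
    have hbound : Nat.card {x // ¬ p x} ≤ n := by
      have h1 := card_add_compl (X := X) p
      have h2 : 0 < Nat.card {x // p x} := by
        have : Nonempty {x // p x} := ⟨⟨a, porb_self ρ a⟩⟩
        exact Nat.card_pos
      omega
    obtain ⟨e', he'⟩ := ih {x // ¬ p x} {y // ¬ q y} inferInstance inferInstance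
      (resPerm ρ _ hp) (resPerm σ _ hq) hbound hcomp
    -- glue
    classical
    refine ⟨{
      toFun := fun x => if h : p x then (F ⟨x, h⟩).1 else (e' ⟨x, h⟩).1
      invFun := fun y => if h : q y then (F.symm ⟨y, h⟩).1 else (e'.symm ⟨y, h⟩).1
      left_inv := ?_
      right_inv := ?_ }, ?_⟩
    · intro x
      by_cases h1 : p x
      · simp only [dif_pos h1, dif_pos (F ⟨x, h1⟩).2]
        have : (⟨(F ⟨x, h1⟩).1, (F ⟨x, h1⟩).2⟩ : {y // q y}) = F ⟨x, h1⟩ := rfl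
        rw [dif_pos (F ⟨x, h1⟩).2]
        rw [this, Equiv.symm_apply_apply]
      · simp only [dif_neg h1, dif_neg (e' ⟨x, h1⟩).2]
        have : (⟨(e' ⟨x, h1⟩).1, (e' ⟨x, h1⟩).2⟩ : {y // ¬ q y}) = e' ⟨x, h1⟩ := rfl
        rw [this, Equiv.symm_apply_apply]
    · intro y
      by_cases h1 : q y
      · simp only [dif_pos h1, dif_pos (F.symm ⟨y, h1⟩).2]
        have : (⟨(F.symm ⟨y, h1⟩).1, (F.symm ⟨y, h1⟩).2⟩ : {x // p x}) = F.symm ⟨y, h1⟩ := rfl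
        rw [dif_pos (F.symm ⟨y, h1⟩).2]
        rw [this, Equiv.apply_symm_apply]
      · simp only [dif_neg h1, dif_neg (e'.symm ⟨y, h1⟩).2]
        have : (⟨(e'.symm ⟨y, h1⟩).1, (e'.symm ⟨y, h1⟩).2⟩ : {x // ¬ p x}) = e'.symm ⟨y, h1⟩ := rfl
        rw [this, Equiv.apply_symm_apply]
    · intro g x
      by_cases h1 : p x
      · have h2 : p (ρ g x) := (porb_smul ρ a g).mpr h1
        simp only [Equiv.coe_fn_mk, dif_pos h1, dif_pos h2]
        exact hF g ⟨x, h1⟩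
      · have h2 : ¬ p (ρ g x) := hp g x h1
        simp only [Equiv.coe_fn_mk, dif_neg h1, dif_neg h2]
        exact congrArg Subtype.val (he' g ⟨x, h1⟩)

set_option maxHeartbeats 1000000
set_option synthInstance.maxHeartbeats 400000

section BurnsideProof
variable {G : Type} [Group G]

/-- fixed points of a sum action -/
lemma fix_sum_card {α β : Type} [Finite α] [Finite β]
    (ρ : G →* Equiv.Perm α) (σ : G →* Equiv.Perm β) (τ : G →* Equiv.Perm (α ⊕ β))
    (hτ : ∀ (g : G) (z : α ⊕ β), τ g z = Sum.map (ρ g) (σ g) z) (H : Subgroup G) :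
    Nat.card {z : α ⊕ β // ∀ g ∈ H, τ g z = z} =
      Nat.card {x : α // ∀ g ∈ H, ρ g x = x} + Nat.card {y : β // ∀ g ∈ H, σ g y = y} := by
  rw [← Nat.card_sum]
  apply Nat.card_congr
  exact
    { toFun := fun z =>
        match z with
        | ⟨Sum.inl x, hx⟩ => Sum.inl ⟨x, fun g hg => by
            have := hx g hg; rw [hτ] at this; simpa using this⟩
        | ⟨Sum.inr y, hy⟩ => Sum.inr ⟨y, fun g hg => by
            have := hy g hg; rw [hτ] at this; simpa using this⟩
      invFun := fun z =>
        match z with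
        | Sum.inl ⟨x, hx⟩ => ⟨Sum.inl x, fun g hg => by rw [hτ]; simp [hx g hg]⟩
        | Sum.inr ⟨y, hy⟩ => ⟨Sum.inr y, fun g hg => by rw [hτ]; simp [hy g hg]⟩
      left_inv := fun z => by rcases z with ⟨x | y, h⟩ <;> rfl
      right_inv := fun z => by rcases z with ⟨x, hx⟩ | ⟨y, hy⟩ <;> rfl }

/-- fixed points of a product action -/
lemma fix_prod_card {α β : Type} [Finite α] [Finite β]
    (ρ : G →* Equiv.Perm α) (σ : G →* Equiv.Perm β) (τ : G →* Equiv.Perm (α × β))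
    (hτ : ∀ (g : G) (z : α × β), τ g z = (ρ g z.1, σ g z.2)) (H : Subgroup G) :
    Nat.card {z : α × β // ∀ g ∈ H, τ g z = z} =
      Nat.card {x : α // ∀ g ∈ H, ρ g x = x} * Nat.card {y : β // ∀ g ∈ H, σ g y = y} := by
  rw [← Nat.card_prod]
  apply Nat.card_congr
  exact
    { toFun := fun z =>
        (⟨z.1.1, fun g hg => by
            have := z.2 g hg; rw [hτ] at this; exact congrArg Prod.fst this⟩,
         ⟨z.1.2, fun g hg => by
            have := z.2 g hg; rw [hτ] at this; exact congrArg Prod.snd this⟩)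
      invFun := fun w => ⟨(w.1.1, w.2.1), fun g hg => by
        rw [hτ]; exact Prod.ext (w.1.2 g hg) (w.2.2 g hg)⟩
      left_inv := fun z => rfl
      right_inv := fun w => rfl }

/-- conjugation of the subgroup relates fixed-point sets -/
lemma fix_conj_card {α : Type} (ρ : G →* Equiv.Perm α) (H : Subgroup G) (g : G) :
    Nat.card {x : α // ∀ h ∈ H, ρ h x = x} =
      Nat.card {x : α // ∀ h ∈ Subgroup.map (MulAut.conj g).toMonoidHom H, ρ h x = x} := by
  apply Nat.card_congr
  refine
    { toFun := fun x => ⟨ρ g x.1, ?_⟩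
      invFun := fun y => ⟨ρ g⁻¹ y.1, ?_⟩
      left_inv := fun x => Subtype.ext (by simp [← Equiv.Perm.mul_apply, ← map_mul])
      right_inv := fun y => Subtype.ext (by simp) }
  · rintro k hk
    obtain ⟨h, hH, rfl⟩ := Subgroup.mem_map.mp hk
    have hgh : (MulAut.conj g).toMonoidHom h * g = g * h := by
      simp [MulAut.conj_apply]
    rw [← Equiv.Perm.mul_apply, ← map_mul, hgh, map_mul, Equiv.Perm.mul_apply, x.2 h hH]
  · intro h hH
    have hk : g * h * g⁻¹ ∈ Subgroup.map (MulAut.conj g).toMonoidHom H :=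
      Subgroup.mem_map.mpr ⟨h, hH, by simp [MulAut.conj_apply]⟩
    have h2 := congrArg (ρ g⁻¹) (y.2 (g * h * g⁻¹) hk)
    rwa [← Equiv.Perm.mul_apply, ← map_mul,
      show g⁻¹ * (g * h * g⁻¹) = h * g⁻¹ by group, map_mul, Equiv.Perm.mul_apply] at h2

/-- the mark homomorphism on the free commutative ring -/
noncomputable def markHom (H : Subgroup G) : FreeCommRing (FinGSet G) →+* ℤ :=
  FreeCommRing.lift fun S => (Nat.card {x : S.X // ∀ h : G, h ∈ H → S.ρ h x = x} : ℤ)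

lemma disjUnion_apply (S T : FinGSet G) (g : G) (z : S.X ⊕ T.X) :
    (S.disjUnion T).ρ g z = Sum.map (S.ρ g) (T.ρ g) z := rfl

lemma prod_apply' (S T : FinGSet G) (g : G) (z : S.X × T.X) :
    (S.prod T).ρ g z = (S.ρ g z.1, T.ρ g z.2) := rfl

lemma fix_disjUnion_card (S T : FinGSet G) (H : Subgroup G) :
    Nat.card {z : (S.disjUnion T).X // ∀ g ∈ H, (S.disjUnion T).ρ g z = z} =
      Nat.card {x : S.X // ∀ g ∈ H, S.ρ g x = x} + Nat.card {y : T.X // ∀ g ∈ H, T.ρ g y = y} :=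
  fix_sum_card S.ρ T.ρ (S.disjUnion T).ρ (disjUnion_apply S T) H

lemma fix_prod_card' (S T : FinGSet G) (H : Subgroup G) :
    Nat.card {z : (S.prod T).X // ∀ g ∈ H, (S.prod T).ρ g z = z} =
      Nat.card {x : S.X // ∀ g ∈ H, S.ρ g x = x} * Nat.card {y : T.X // ∀ g ∈ H, T.ρ g y = y} :=
  fix_prod_card S.ρ T.ρ (S.prod T).ρ (prod_apply' S T) H

lemma markHom_rel (H : Subgroup G) : ∀ z ∈ BurnsideRel G, markHom H z = 0 := by
  rintro z (⟨S, T, rfl⟩ | ⟨S, T, rfl⟩ | ⟨S, T, hST, rfl⟩ | rfl)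
  · simp only [markHom, map_sub, FreeCommRing.lift_of]
    rw [fix_disjUnion_card S T H]
    push_cast; ring
  · simp only [markHom, map_sub, map_mul, FreeCommRing.lift_of]
    rw [fix_prod_card' S T H]
    push_cast; ring
  · obtain ⟨e, he⟩ := hST
    simp only [markHom, map_sub, FreeCommRing.lift_of]
    rw [card_fix_congr S.ρ T.ρ e he H]
    ring
  · simp only [markHom, map_sub, map_one, FreeCommRing.lift_of]
    haveI : Subsingleton (FinGSet.point G).X := inferInstanceAs (Subsingleton PUnit)
    haveI : Inhabited (FinGSet.point G).X := inferInstanceAs (Inhabited PUnit)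
    haveI : Unique (FinGSet.point G).X := Unique.mk' _
    have h0 : ∀ x : (FinGSet.point G).X, ∀ h : G, h ∈ H → (FinGSet.point G).ρ h x = x :=
      fun x h hh => Subsingleton.elim _ _
    rw [Nat.card_congr (Equiv.subtypeUnivEquiv h0), Nat.card_unique]
    ring

lemma span_le_ker (H : Subgroup G) :
    Ideal.span (BurnsideRel G) ≤ RingHom.ker (markHom (G := G) H) :=
  Ideal.span_le.mpr fun z hz => RingHom.mem_ker.mpr (markHom_rel H z hz)

/-- the mark homomorphism on the Burnside ring, for a single subgroup -/
noncomputable def chiBar (H : Subgroup G) : BurnsideRing G →+* ℤ :=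
  Ideal.Quotient.lift _ (markHom H) fun a ha => RingHom.mem_ker.mp (span_le_ker H ha)

lemma chiBar_mk (H : Subgroup G) (S : FinGSet G) :
    chiBar H (BurnsideRing.mk S) =
      (Nat.card {x : S.X // ∀ h : G, h ∈ H → S.ρ h x = x} : ℤ) := by
  simp [chiBar, BurnsideRing.mk, Ideal.Quotient.lift_mk, markHom]

lemma chiBar_conj {H K : Subgroup G} (g : G)
    (hg : Subgroup.map (MulAut.conj g).toMonoidHom H = K) :
    chiBar (G := G) H = chiBar K := by
  have hm : markHom (G := G) H = markHom K := by
    apply FreeCommRing.hom_ext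
    intro S
    rw [markHom, markHom, FreeCommRing.lift_of, FreeCommRing.lift_of, ← hg]
    exact_mod_cast congrArg Nat.cast (fix_conj_card S.ρ H g)
  apply RingHom.ext
  intro x
  obtain ⟨y, rfl⟩ := Ideal.Quotient.mk_surjective x
  simp [chiBar, Ideal.Quotient.lift_mk, hm]

/-- the full mark homomorphism -/
noncomputable def chi : BurnsideRing G →+* (SubgroupConjClass G → ℤ) :=
  Pi.ringHom fun c => Quot.lift chiBar (fun H K h => by
    obtain ⟨g, hg⟩ := h; exact chiBar_conj g hg) c

lemma mk_eq_of_rel {x y : FreeCommRing (FinGSet G)} (h : x - y ∈ BurnsideRel G) :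
    Ideal.Quotient.mk (Ideal.span (BurnsideRel G)) x = Ideal.Quotient.mk _ y :=
  Ideal.Quotient.eq.mpr (Ideal.subset_span h)

lemma mk_disjUnion (S T : FinGSet G) :
    BurnsideRing.mk (S.disjUnion T) = BurnsideRing.mk S + BurnsideRing.mk T := by
  have h : FreeCommRing.of (S.disjUnion T) - (FreeCommRing.of S + FreeCommRing.of T) ∈
      BurnsideRel G := Or.inl ⟨S, T, by ring⟩
  have := mk_eq_of_rel h
  simpa [BurnsideRing.mk, map_add] using this

lemma mk_prod (S T : FinGSet G) :
    BurnsideRing.mk (S.prod T) = BurnsideRing.mk S * BurnsideRing.mk T := by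
  have h : FreeCommRing.of (S.prod T) - FreeCommRing.of S * FreeCommRing.of T ∈
      BurnsideRel G := Or.inr (Or.inl ⟨S, T, rfl⟩)
  have := mk_eq_of_rel h
  simpa [BurnsideRing.mk, map_mul] using this

lemma mk_iso {S T : FinGSet G} (hST : S.Iso T) :
    BurnsideRing.mk S = BurnsideRing.mk T :=
  mk_eq_of_rel (Or.inr (Or.inr (Or.inl ⟨S, T, hST, rfl⟩)))

lemma mk_point : BurnsideRing.mk (FinGSet.point G) = 1 := by
  have h : FreeCommRing.of (FinGSet.point G) - 1 ∈ BurnsideRel G := Or.inr (Or.inr (Or.inr rfl))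
  have := mk_eq_of_rel h
  simpa [BurnsideRing.mk, map_one] using this

/-- the empty `G`-set -/
def emptyGSet (G : Type) [Group G] : FinGSet G where
  X := Empty
  ρ := 1

lemma mk_empty : BurnsideRing.mk (emptyGSet G) = 0 := by
  have hIso : ((emptyGSet G).disjUnion (emptyGSet G)).Iso (emptyGSet G) :=
    ⟨Equiv.sumEmpty Empty Empty, fun g x => by rcases x with x | x <;> exact x.elim⟩
  have h1 := mk_disjUnion (emptyGSet G) (emptyGSet G)
  have h2 := mk_iso hIso
  have h3 : BurnsideRing.mk (emptyGSet G) + BurnsideRing.mk (emptyGSet G) =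
      BurnsideRing.mk (emptyGSet G) := by rw [← h1, h2]
  exact add_eq_left.mp h3

lemma exists_repr (x : BurnsideRing G) :
    ∃ S T : FinGSet G, x = BurnsideRing.mk S - BurnsideRing.mk T := by
  obtain ⟨y, rfl⟩ := Ideal.Quotient.mk_surjective x
  induction y using FreeCommRing.induction_on with
  | neg_one =>
    refine ⟨emptyGSet G, FinGSet.point G, ?_⟩
    rw [map_neg, map_one, mk_empty, mk_point]; ring
  | of S =>
    refine ⟨S, emptyGSet G, ?_⟩
    rw [mk_empty, sub_zero]; rfl
  | add x y hx hy =>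
    obtain ⟨S, T, hS⟩ := hx
    obtain ⟨S', T', hS'⟩ := hy
    exact ⟨S.disjUnion S', T.disjUnion T', by
      rw [map_add, hS, hS', mk_disjUnion, mk_disjUnion]; ring⟩
  | mul x y hx hy =>
    obtain ⟨S, T, hS⟩ := hx
    obtain ⟨S', T', hS'⟩ := hy
    exact ⟨(S.prod S').disjUnion (T.prod T'), (S.prod T').disjUnion (T.prod S'), by
      rw [map_mul, hS, hS', mk_disjUnion, mk_disjUnion, mk_prod, mk_prod, mk_prod, mk_prod]
      ring⟩

end BurnsideProof

/-- **Injectivity of the mark homomorphism of the Burnside ring.**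
Let `G` be a finite group.  The ring homomorphism `χ : A(G) → ∏_{(H)} ℤ`, sending the
class of a finite `G`-set `S` to the tuple of fixed-point cardinalities `|S^H|` indexed
by conjugacy classes of subgroups `H ≤ G`, is injective. -/
theorem burnside_mark_homomorphism_injective (G : Type) [Group G] [Finite G] :
    ∃ χ : BurnsideRing G →+* (SubgroupConjClass G → ℤ),
      (∀ (S : FinGSet G) (H : Subgroup G),
        χ (BurnsideRing.mk S) (Quot.mk _ H) =
          (Nat.card {x : S.X // ∀ h : G, h ∈ H → S.ρ h x = x} : ℤ)) ∧
      Function.Injective χ := by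
  refine ⟨chi, fun S H => ?_, ?_⟩
  · show chiBar H (BurnsideRing.mk S) = _
    exact chiBar_mk H S
  · rw [injective_iff_map_eq_zero]
    intro x hx
    obtain ⟨S, T, rfl⟩ := exists_repr x
    have hmark : ∀ H : Subgroup G,
        Nat.card {x : S.X // ∀ g ∈ H, S.ρ g x = x} =
          Nat.card {y : T.X // ∀ g ∈ H, T.ρ g y = y} := by
      intro H
      have h2 : chiBar H (BurnsideRing.mk S) - chiBar H (BurnsideRing.mk T) = 0 := by
        have := congrFun hx (Quot.mk _ H)
        rw [map_sub] at this
        exact this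
      rw [chiBar_mk, chiBar_mk, sub_eq_zero] at h2
      exact_mod_cast h2
    have hIso : S.Iso T :=
      marks_iso (Nat.card S.X) S.X T.X inferInstance inferInstance S.ρ T.ρ le_rfl hmark
    rw [mk_iso hIso, sub_self]
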